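/- arXiv:2403.17340 — 8 statements merged into one kernel-verified Lean document; each statement's English description precedes it below -/
import Mathlib

section
/- Let (A,R) and (B,S) be uniform preorders, f : (A,R) → (B,S) monotone, and g : B → A a function. Then g is monotone from (B,S) to (A,R) and right adjoint to f (i.e. id ≤ g∘f and f∘g ≤ id in the hom-orderings) if and only if (1) the relation {(f(g(b)), b) | b ∈ B} is in S, and (2) for every s ∈ S, the relation s* = {(a, g b) | (f a, b) ∈ s} is in R. -/
/-- `R` is a uniform preorder structure on `A`. -/
def IsUPO {A : Type*} (R : Set (Set (A × A))) : Prop :=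
  {p : A × A | p.1 = p.2} ∈ R ∧
  (∀ r ∈ R, ∀ s ∈ R, {p : A × A | ∃ b, (p.1, b) ∈ r ∧ (b, p.2) ∈ s} ∈ R) ∧
  (∀ r ∈ R, ∀ s, s ⊆ r → s ∈ R)

/-- `f` is a monotone map of uniform preorders `(A,R) → (B,S)`. -/
def UMono {A B : Type*} (R : Set (Set (A × A))) (S : Set (Set (B × B))) (f : A → B) : Prop :=
  ∀ r ∈ R, (fun p : A × A => (f p.1, f p.2)) '' r ∈ S

theorem stmt_4 {A B : Type*} (R : Set (Set (A × A))) (S : Set (Set (B × B)))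
    (hR : IsUPO R) (hS : IsUPO S) (f : A → B) (hf : UMono R S f) (g : B → A) :
    -- g is monotone and right adjoint to f:  id ≤ g∘f  and  f∘g ≤ id
    (UMono S R g ∧
      Set.range (fun a : A => (a, g (f a))) ∈ R ∧
      Set.range (fun b : B => (f (g b), b)) ∈ S) ↔
    -- (1) the counit relation is in S, and (2) s* ∈ R for every s ∈ S
    (Set.range (fun b : B => (f (g b), b)) ∈ S ∧
      ∀ s ∈ S, {p : A × A | ∃ b, (f p.1, b) ∈ s ∧ p.2 = g b} ∈ R) := by
  obtain ⟨hRid, hRcomp, hRdown⟩ := hR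
  obtain ⟨hSid, hScomp, hSdown⟩ := hS
  constructor
  · rintro ⟨hg, hη, hε⟩
    refine ⟨hε, fun s hs => ?_⟩
    have hgs : (fun p : B × B => (g p.1, g p.2)) '' s ∈ R := hg s hs
    have hcomp := hRcomp _ hη _ hgs
    refine hRdown _ hcomp _ ?_
    rintro ⟨a, x⟩ ⟨b, hb, rfl⟩
    exact ⟨g (f a), ⟨a, rfl⟩, ⟨(f a, b), hb, rfl⟩⟩
  · rintro ⟨hε, hstar⟩
    refine ⟨?_, ?_, hε⟩
    · intro s hs
      have ht : {p : B × B | ∃ m, (p.1, m) ∈ Set.range (fun b : B => (f (g b), b)) ∧ (m, p.2) ∈ s} ∈ S :=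
        hScomp _ hε _ hs
      refine hRdown _ (hstar _ ht) _ ?_
      rintro ⟨x, y⟩ ⟨⟨b, b'⟩, hb, h⟩
      simp only [Prod.mk.injEq] at h
      obtain ⟨h1, h2⟩ := h
      subst h1; subst h2
      exact ⟨b', ⟨b, ⟨b, rfl⟩, hb⟩, rfl⟩
    · have hd : (fun p : A × A => (f p.1, f p.2)) '' {p : A × A | p.1 = p.2} ∈ S := hf _ hRid
      refine hRdown _ (hstar _ hd) _ ?_
      rintro ⟨x, y⟩ ⟨a, h⟩
      simp only [Prod.mk.injEq] at h
      obtain ⟨h1, h2⟩ := h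
      subst h1; subst h2
      exact ⟨f a, ⟨(a, a), rfl, rfl⟩, rfl⟩
end

section
/- A uniform preorder (A,R) is cartesian if and only if there exist a function ∧ : A×A → A and an element ⊤ ∈ A such that the relations τ = {(a,⊤) | a ∈ A}, λ = {(a∧b, a) | a,b ∈ A}, ρ = {(a∧b, b) | a,b ∈ A} are in R, and for all r, s ∈ R the relation ⟪r,s⟫ = {(a, b∧c) | (a,b) ∈ r, (a,c) ∈ s} is in R. -/
/-- The product uniform preorder structure `R ⊗ S` on `A × B`, generated by the
relations `r × s` for `r ∈ R`, `s ∈ S`. -/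
def prodUPO {A B : Type*} (R : Set (Set (A × A))) (S : Set (Set (B × B))) :
    Set (Set ((A × B) × (A × B))) :=
  {t | ∃ r ∈ R, ∃ s ∈ S, t ⊆ {p | (p.1.1, p.2.1) ∈ r ∧ (p.1.2, p.2.2) ∈ s}}

/-- `(A,R)` is cartesian: the terminal projection and the diagonal (which is always
monotone) have right adjoints in `UOrd`.  The right adjoint of the terminal
projection amounts to an element `top` with `{(a,top) | a ∈ A} ∈ R`; the right
adjoint of the diagonal is a monotone map `w : (A×A, R⊗R) → (A,R)` with unit
`id ≤ w∘δ` and counit `δ∘w ≤ id`. -/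
def IsCartesianUPO {A : Type*} (R : Set (Set (A × A))) : Prop :=
  (∃ top : A, Set.range (fun a : A => (a, top)) ∈ R) ∧
  UMono R (prodUPO R R) (fun a : A => (a, a)) ∧
  (∃ w : A × A → A, UMono (prodUPO R R) R w ∧
    Set.range (fun a : A => (a, w (a, a))) ∈ R ∧
    Set.range (fun p : A × A => ((w p, w p), p)) ∈ prodUPO R R)

theorem stmt_5 {A : Type*} (R : Set (Set (A × A))) (hR : IsUPO R) :
    IsCartesianUPO R ↔
    ∃ (wedge : A × A → A) (top : A),
      Set.range (fun a : A => (a, top)) ∈ R ∧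
      Set.range (fun p : A × A => (wedge p, p.1)) ∈ R ∧
      Set.range (fun p : A × A => (wedge p, p.2)) ∈ R ∧
      ∀ r ∈ R, ∀ s ∈ R,
        {p : A × A | ∃ b c, (p.1, b) ∈ r ∧ (p.1, c) ∈ s ∧ p.2 = wedge (b, c)} ∈ R := by
  obtain ⟨hid, hcomp, hdown⟩ := hR
  constructor
  · rintro ⟨⟨top, htop⟩, hδ, w, hw, hunit, hcounit⟩
    refine ⟨w, top, htop, ?_, ?_, ?_⟩
    · obtain ⟨r, hr, s, hs, hsub⟩ := hcounit
      refine hdown r hr _ ?_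
      rintro _ ⟨p, rfl⟩
      exact (hsub ⟨p, rfl⟩).1
    · obtain ⟨r, hr, s, hs, hsub⟩ := hcounit
      refine hdown s hs _ ?_
      rintro _ ⟨p, rfl⟩
      exact (hsub ⟨p, rfl⟩).2
    · intro r hr s hs
      have ht' : {q : (A × A) × (A × A) |
          q.1.1 = q.1.2 ∧ (q.1.1, q.2.1) ∈ r ∧ (q.1.1, q.2.2) ∈ s} ∈ prodUPO R R := by
        refine ⟨r, hr, s, hs, ?_⟩
        rintro q ⟨he, h1, h2⟩
        exact ⟨h1, he ▸ h2⟩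
      have himg := hw _ ht'
      have hcompo := hcomp _ hunit _ himg
      refine hdown _ hcompo _ ?_
      rintro ⟨a, x⟩ ⟨b, c, h1, h2, hx⟩
      exact ⟨w (a, a), ⟨a, rfl⟩,
        ⟨((a, a), (b, c)), ⟨rfl, h1, h2⟩, Prod.ext rfl hx.symm⟩⟩
  · rintro ⟨wedge, top, htop, hlam, hrho, hpair⟩
    refine ⟨⟨top, htop⟩, ?_, wedge, ?_, ?_, ?_⟩
    · intro r hr
      refine ⟨r, hr, r, hr, ?_⟩
      rintro _ ⟨⟨a, b⟩, hab, rfl⟩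
      exact ⟨hab, hab⟩
    · rintro t ⟨r, hr, s, hs, hts⟩
      have hlr := hcomp _ hlam _ hr
      have hrs := hcomp _ hrho _ hs
      have hp := hpair _ hlr _ hrs
      refine hdown _ hp _ ?_
      rintro _ ⟨q, hq, rfl⟩
      obtain ⟨h1, h2⟩ := hts hq
      exact ⟨q.2.1, q.2.2, ⟨q.1.1, ⟨q.1, rfl⟩, h1⟩, ⟨q.1.2, ⟨q.1, rfl⟩, h2⟩, rfl⟩
    · have hp := hpair _ hid _ hid
      refine hdown _ hp _ ?_
      rintro _ ⟨a, rfl⟩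
      exact ⟨a, a, rfl, rfl, rfl⟩
    · refine ⟨_, hlam, _, hrho, ?_⟩
      rintro _ ⟨p, rfl⟩
      exact ⟨⟨p, rfl⟩, ⟨p, rfl⟩⟩
end

section
/- The set of all subrelations of graphs of primitive recursive functions ℕ → ℕ forms a uniform preorder structure on ℕ which is cartesian: a top element is given by 0 (with τ realized by the constant zero function) and a meet operation by a primitive recursive pairing function, verifying the conditions of the combinatorial criterion for cartesianness. -/
/-- The set of all subrelations of graphs of primitive recursive functions `ℕ → ℕ`. -/
def primrecUPO : Set (Set (ℕ × ℕ)) :=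
  {r | ∃ f : ℕ → ℕ, Nat.Primrec f ∧ r ⊆ {p : ℕ × ℕ | f p.1 = p.2}}

theorem stmt_6 :
    IsUPO primrecUPO ∧
    -- τ for the top element 0 (realized by the constant zero function)
    Set.range (fun n : ℕ => (n, 0)) ∈ primrecUPO ∧
    -- λ and ρ for the primitive recursive pairing function
    Set.range (fun p : ℕ × ℕ => (Nat.pair p.1 p.2, p.1)) ∈ primrecUPO ∧
    Set.range (fun p : ℕ × ℕ => (Nat.pair p.1 p.2, p.2)) ∈ primrecUPO ∧
    -- pairing of relations
    (∀ r ∈ primrecUPO, ∀ s ∈ primrecUPO,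
      {p : ℕ × ℕ | ∃ b c, (p.1, b) ∈ r ∧ (p.1, c) ∈ s ∧ p.2 = Nat.pair b c} ∈ primrecUPO) := by
  refine ⟨⟨⟨id, ?_, ?_⟩, ?_, ?_⟩, ⟨fun _ => 0, Nat.Primrec.zero, ?_⟩, ⟨fun n => n.unpair.1, Nat.Primrec.left, ?_⟩, ⟨fun n => n.unpair.2, Nat.Primrec.right, ?_⟩, ?_⟩
  · exact Nat.Primrec.id
  · intro p hp; exact hp
  · rintro r ⟨f, hf, hr⟩ s ⟨g, hg, hs⟩
    refine ⟨g ∘ f, hg.comp hf, ?_⟩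
    rintro p ⟨b, hb1, hb2⟩
    have h1 := hr hb1
    have h2 := hs hb2
    simp only [Set.mem_setOf_eq] at h1 h2 ⊢
    simp [Function.comp, h1, h2]
  · rintro r ⟨f, hf, hr⟩ s hsr
    exact ⟨f, hf, hsr.trans hr⟩
  · rintro p ⟨n, rfl⟩; rfl
  · rintro p ⟨q, rfl⟩; simp
  · rintro p ⟨q, rfl⟩; simp
  · rintro r ⟨f, hf, hr⟩ s ⟨g, hg, hs⟩
    refine ⟨fun n => Nat.pair (f n) (g n), ?_, ?_⟩
    · have : Primrec fun n => Nat.pair (f n) (g n) :=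
        Primrec₂.natPair.comp (Primrec.nat_iff.2 hf) (Primrec.nat_iff.2 hg)
      exact Primrec.nat_iff.1 this
    · rintro p ⟨b, c, hb, hc, hp⟩
      have h1 := hr hb
      have h2 := hs hc
      simp only [Set.mem_setOf_eq] at h1 h2 ⊢
      rw [h1, h2, hp]
end

section
/- In fam(D(A,R)), existential quantification along u : J → I, given by (∃_u φ)(i) = ⋃_{u(j)=i} φ(j) for φ : J → P(A), is left adjoint to reindexing φ ↦ φ∘u, and satisfies the Beck–Chevalley condition: for any pullback square of sets with v : K → I, ū : L → K, v̄ : L → J, u : J → I, we have (∃_v ψ)∘u ≅ ∃_{v̄}(ψ∘ū) for all ψ : K → P(A). -/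
/-- The fiber ordering of `fam(D(A,R))(I)` on predicates `I → P(A)`:
`φ ≤ ψ` iff there is `r ∈ R` with `∀ i, ∀ a ∈ φ i, ∃ b ∈ ψ i, (a,b) ∈ r`. -/
def dle {A : Type*} (R : Set (Set (A × A))) {I : Type*} (φ ψ : I → Set A) : Prop :=
  ∃ r ∈ R, ∀ i, ∀ a ∈ φ i, ∃ b ∈ ψ i, (a, b) ∈ r

/-- Existential quantification along `u : J → I`, given by union over fibers. -/
def exu {A I J : Type*} (u : J → I) (φ : J → Set A) : I → Set A :=
  fun i => {a | ∃ j, u j = i ∧ a ∈ φ j}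

theorem stmt_9 {A : Type*} (R : Set (Set (A × A))) (hR : IsUPO R) :
    -- ∃_u is left adjoint to reindexing along u
    (∀ (I J : Type*) (u : J → I) (φ : J → Set A) (χ : I → Set A),
      dle R (exu u φ) χ ↔ dle R φ (χ ∘ u)) ∧
    -- Beck–Chevalley: for any pullback square u ∘ v̄ = v ∘ ū
    (∀ (I J K L : Type*) (u : J → I) (v : K → I) (ub : L → K) (vb : L → J),
      (∀ l, u (vb l) = v (ub l)) →
      (∀ j k, u j = v k → ∃! l, vb l = j ∧ ub l = k) →
      ∀ ψ : K → Set A,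
        dle R ((exu v ψ) ∘ u) (exu vb (ψ ∘ ub)) ∧
        dle R (exu vb (ψ ∘ ub)) ((exu v ψ) ∘ u)) := by
  obtain ⟨hdiag, _, _⟩ := hR
  constructor
  · intro I J u φ χ
    constructor
    · rintro ⟨r, hr, h⟩
      exact ⟨r, hr, fun j a ha => h (u j) a ⟨j, rfl, ha⟩⟩
    · rintro ⟨r, hr, h⟩
      refine ⟨r, hr, ?_⟩
      rintro i a ⟨j, rfl, ha⟩
      exact h j a ha
  · intro I J K L u v ub vb hcomm hpb ψ
    constructor
    · refine ⟨_, hdiag, ?_⟩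
      rintro j a ⟨k, hk, ha⟩
      obtain ⟨l, ⟨hl1, hl2⟩, -⟩ := hpb j k hk.symm
      exact ⟨a, ⟨l, hl1, by simpa [Function.comp, hl2] using ha⟩, rfl⟩
    · refine ⟨_, hdiag, ?_⟩
      rintro j a ⟨l, hl, ha⟩
      exact ⟨a, ⟨ub l, by rw [← hcomm, hl], ha⟩, rfl⟩
end

section
/- Let (A,R) be a uniform preorder. Every singleton-valued predicate is ∃-prime in fam(D(A,R)): if φ : I → A, ψ : J → P(A), and u : J → I are such that η∘φ ≤ ∃_u ψ in fam(D(A,R))(I) (where η is the singleton map and (∃_u ψ)(i) = ⋃_{u(j)=i} ψ(j)), then there exists a section s : I → J of u with η∘φ ≤ ψ∘s. -/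
theorem stmt_10 {A I J : Type*} (R : Set (Set (A × A))) (hR : IsUPO R)
    (φ : I → A) (ψ : J → Set A) (u : J → I)
    (h : dle R (fun i => ({φ i} : Set A)) (exu u ψ)) :
    ∃ s : I → J, u ∘ s = id ∧ dle R (fun i => ({φ i} : Set A)) (ψ ∘ s) := by
  obtain ⟨r, hr, hmain⟩ := h
  have key : ∀ i : I, ∃ j : J, u j = i ∧ ∃ b ∈ ψ j, (φ i, b) ∈ r := by
    intro i
    obtain ⟨b, ⟨j, hji, hbj⟩, hrb⟩ := hmain i (φ i) rfl
    exact ⟨j, hji, b, hbj, hrb⟩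
  choose s hs hb using key
  refine ⟨s, funext hs, r, hr, ?_⟩
  intro i a ha
  cases ha
  exact hb i
end

section
/- Moreover the Frobenius condition holds in fam(D(A,R)) for a cartesian uniform preorder (A,R): for every function u : J → I and predicates φ : I → P(A), ψ : J → P(A), the predicates φ ∧ ∃_u ψ and ∃_u((φ∘u) ∧ ψ) are isomorphic, where (χ ∧ ξ)(i) = {a ∧ b | a ∈ χ(i), b ∈ ξ(i)} and (∃_u ψ)(i) = ⋃_{u(j)=i} ψ(j). -/
/-- The pointwise meet on subsets: `U ∧ V = {u ∧ v | u ∈ U, v ∈ V}`. -/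
def pmeet {A : Type*} (wedge : A × A → A) (U V : Set A) : Set A :=
  {c | ∃ a ∈ U, ∃ b ∈ V, c = wedge (a, b)}

theorem stmt_13 {A I J : Type*} (R : Set (Set (A × A))) (hR : IsUPO R)
    (wedge : A × A → A) (top : A)
    (htau : Set.range (fun a : A => (a, top)) ∈ R)
    (hlam : Set.range (fun p : A × A => (wedge p, p.1)) ∈ R)
    (hrho : Set.range (fun p : A × A => (wedge p, p.2)) ∈ R)
    (hpair : ∀ r ∈ R, ∀ s ∈ R,
      {p : A × A | ∃ b c, (p.1, b) ∈ r ∧ (p.1, c) ∈ s ∧ p.2 = wedge (b, c)} ∈ R)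
    (u : J → I) (φ : I → Set A) (ψ : J → Set A) :
    -- Frobenius: φ ∧ ∃_u ψ ≅ ∃_u((φ∘u) ∧ ψ)
    dle R (fun i => pmeet wedge (φ i) (exu u ψ i))
          (exu u (fun j => pmeet wedge (φ (u j)) (ψ j))) ∧
    dle R (exu u (fun j => pmeet wedge (φ (u j)) (ψ j)))
          (fun i => pmeet wedge (φ i) (exu u ψ i)) := by
  constructor
  · exact ⟨_, hR.1, fun i c hc => by
      obtain ⟨a, ha, b, ⟨j, hj, hb⟩, rfl⟩ := hc
      exact ⟨wedge (a, b), ⟨j, hj, a, hj ▸ ha, b, hb, rfl⟩, rfl⟩⟩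
  · exact ⟨_, hR.1, fun i c hc => by
      obtain ⟨j, hj, a, ha, b, hb, rfl⟩ := hc
      exact ⟨wedge (a, b), ⟨a, hj ▸ ha, b, ⟨j, hj, hb⟩, rfl⟩, rfl⟩⟩
end

section
/- Let (A,R) be a relationally complete cartesian uniform preorder with universal relation @. For u : J → I and φ, ψ : J → P(A), define ∀_u(φ⇒ψ) : I → P(A) by ∀_u(φ⇒ψ)(i) = ⋂_{u(j)=i} {a ∈ A | ∀ b ∈ φ(j), ∃ c ∈ ψ(j), (a∧b, c) ∈ @}. Then: (1) (∀_u(φ⇒ψ))∘u ∧ φ ≤ ψ in fam(D(A,R))(J), realized by @; and (2) for any ξ : I → P(A), if (ξ∘u) ∧ φ ≤ ψ then ξ ≤ ∀_u(φ⇒ψ). -/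
/-- The synthetic connective `∀_u(φ⇒ψ)` built from the universal relation. -/
def allU {A I J : Type*} (wedge : A × A → A) (atR : Set (A × A)) (u : J → I)
    (φ ψ : J → Set A) : I → Set A :=
  fun i => {a | ∀ j, u j = i → ∀ b ∈ φ j, ∃ c ∈ ψ j, (wedge (a, b), c) ∈ atR}

theorem stmt_14 {A I J : Type*} (R : Set (Set (A × A))) (hR : IsUPO R)
    (wedge : A × A → A) (top : A)
    (htau : Set.range (fun a : A => (a, top)) ∈ R)
    (hlam : Set.range (fun p : A × A => (wedge p, p.1)) ∈ R)
    (hrho : Set.range (fun p : A × A => (wedge p, p.2)) ∈ R)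
    (hpair : ∀ r ∈ R, ∀ s ∈ R,
      {p : A × A | ∃ b c, (p.1, b) ∈ r ∧ (p.1, c) ∈ s ∧ p.2 = wedge (b, c)} ∈ R)
    -- relational completeness with universal relation atR:
    (atR : Set (A × A)) (hat : atR ∈ R)
    (hcomplete : ∀ r ∈ R, ∃ t ∈ R,
      (∀ a : A, ∃ b, (a, b) ∈ t) ∧
      (∀ a b b', (a, b) ∈ t → (a, b') ∈ t → b = b') ∧
      (∀ a a' b c, (a, a') ∈ t → (wedge (a, b), c) ∈ r → (wedge (a', b), c) ∈ atR))
    (u : J → I) (φ ψ : J → Set A) :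
    -- (1) (∀_u(φ⇒ψ))∘u ∧ φ ≤ ψ, realized by atR
    (∀ j : J, ∀ x ∈ pmeet wedge (allU wedge atR u φ ψ (u j)) (φ j),
      ∃ c ∈ ψ j, (x, c) ∈ atR) ∧
    -- (2) if (ξ∘u) ∧ φ ≤ ψ then ξ ≤ ∀_u(φ⇒ψ)
    (∀ ξ : I → Set A,
      dle R (fun j => pmeet wedge (ξ (u j)) (φ j)) ψ →
      dle R ξ (allU wedge atR u φ ψ)) := by
  constructor
  · rintro j x ⟨a, ha, b, hb, rfl⟩
    exact ha j rfl b hb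
  · rintro ξ ⟨r, hr, hrle⟩
    obtain ⟨t, ht, htot, -, hkey⟩ := hcomplete r hr
    refine ⟨t, ht, fun i a ha => ?_⟩
    obtain ⟨b, hab⟩ := htot a
    refine ⟨b, fun j hji b' hb' => ?_, hab⟩
    obtain ⟨c, hc, hrc⟩ := hrle j (wedge (a, b')) ⟨a, hji ▸ ha, b', hb', rfl⟩
    exact ⟨c, hc, hkey a b b' c hab hrc⟩
end

section
/- Let ℋ be an indexed preorder over Set with existential quantification, and let 𝒜 ⊆ ℋ be an indexed sub-preorder such that (1) every predicate in 𝒜 is ∃-prime in ℋ, and (2) for every set I and φ ∈ ℋ(I) there exist u : J → I and π ∈ 𝒜(J) with φ ≅ ∃_u π. Then every ∃-prime predicate of ℋ is isomorphic to one in 𝒜 (over the same index set). -/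
universe u v

/-- An indexed preorder over `Set` (with `Type u` playing the role of sets),
with existential quantification satisfying the Beck–Chevalley condition. -/
structure IndexedPreorderEx where
  /-- predicates on an index set -/
  P : Type u → Type v
  /-- the fiber ordering -/
  le : {I : Type u} → P I → P I → Prop
  le_refl : ∀ {I : Type u} (φ : P I), le φ φ
  le_trans : ∀ {I : Type u} (φ ψ χ : P I), le φ ψ → le ψ χ → le φ χ
  /-- reindexing along a function -/
  reind : {I J : Type u} → (J → I) → P I → P J
  reind_mono : ∀ {I J : Type u} (u : J → I) (φ ψ : P I),
    le φ ψ → le (reind u φ) (reind u ψ)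
  reind_id : ∀ {I : Type u} (φ : P I),
    le (reind id φ) φ ∧ le φ (reind id φ)
  reind_comp : ∀ {I J K : Type u} (u : J → I) (v : K → J) (φ : P I),
    le (reind v (reind u φ)) (reind (u ∘ v) φ) ∧
    le (reind (u ∘ v) φ) (reind v (reind u φ))
  /-- existential quantification -/
  ex : {I J : Type u} → (J → I) → P J → P I
  /-- `∃_u` is left adjoint to `u*` -/
  ex_adj : ∀ {I J : Type u} (u : J → I) (φ : P J) (ψ : P I),
    le (ex u φ) ψ ↔ le φ (reind u ψ)
  /-- the Beck–Chevalley condition for pullback squares in `Set` -/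
  beck_chevalley : ∀ {I J K L : Type u} (u : J → I) (v : K → I)
    (ub : L → K) (vb : L → J),
    (∀ l, u (vb l) = v (ub l)) →
    (∀ j k, u j = v k → ∃! l, vb l = j ∧ ub l = k) →
    ∀ ψ : P K,
      le (reind u (ex v ψ)) (ex vb (reind ub ψ)) ∧
      le (ex vb (reind ub ψ)) (reind u (ex v ψ))

/-- `π` is an ∃-prime predicate. -/
def IndexedPreorderEx.Prime (H : IndexedPreorderEx.{u, v}) {I : Type u}
    (π : H.P I) : Prop :=
  ∀ {J K : Type u} (u : J → I) (v : K → J) (φ : H.P K),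
    H.le (H.reind u π) (H.ex v φ) →
    ∃ s : J → K, v ∘ s = id ∧ H.le (H.reind u π) (H.reind s φ)

theorem stmt_17 (H : IndexedPreorderEx.{u, v})
    (Asub : ∀ I : Type u, Set (H.P I))
    -- 𝒜 is an indexed sub-preorder (closed under reindexing)
    (hclosed : ∀ {I J : Type u} (u : J → I), ∀ φ ∈ Asub I, H.reind u φ ∈ Asub J)
    -- (1) every predicate in 𝒜 is ∃-prime in ℋ
    (hprime : ∀ {I : Type u}, ∀ π ∈ Asub I, H.Prime π)
    -- (2) every predicate of ℋ is ≅ to ∃_u π for some π ∈ 𝒜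
    (hcover : ∀ {I : Type u} (φ : H.P I), ∃ (J : Type u) (u : J → I),
      ∃ π ∈ Asub J, H.le (H.ex u π) φ ∧ H.le φ (H.ex u π)) :
    -- conclusion: every ∃-prime predicate of ℋ is isomorphic to one in 𝒜
    ∀ {I : Type u} (π : H.P I), H.Prime π →
      ∃ π' ∈ Asub I, H.le π' π ∧ H.le π π' := by
  intro I π hπ
  obtain ⟨J, u, ρ, hρA, hle1, hle2⟩ := hcover π
  -- π ≤ ∃_u ρ, so reind id π ≤ ∃_u ρ
  have h0 : H.le (H.reind id π) (H.ex u ρ) :=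
    H.le_trans _ _ _ (H.reind_id π).1 hle2
  obtain ⟨s, hs, hle3⟩ := hπ id u ρ h0
  refine ⟨H.reind s ρ, hclosed s ρ hρA, ?_, ?_⟩
  · -- s*ρ ≤ π : use ρ ≤ u*(∃_u ρ) ≤ u*π, then reindex by s
    have h1 : H.le ρ (H.reind u (H.ex u ρ)) :=
      (H.ex_adj u ρ (H.ex u ρ)).mp (H.le_refl _)
    have h2 : H.le ρ (H.reind u π) :=
      H.le_trans _ _ _ h1 (H.reind_mono u _ _ hle1)
    have h3 : H.le (H.reind s ρ) (H.reind s (H.reind u π)) :=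
      H.reind_mono s _ _ h2
    have h4 : H.le (H.reind s (H.reind u π)) (H.reind (u ∘ s) π) :=
      (H.reind_comp u s π).1
    rw [hs] at h4
    exact H.le_trans _ _ _ h3 (H.le_trans _ _ _ h4 (H.reind_id π).1)
  · exact H.le_trans _ _ _ (H.reind_id π).2 hle3
end
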